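/- arXiv:1910.02402 — 5 statements merged into one kernel-verified Lean document; each statement's English description precedes it below -/
import Mathlib

section
/- Let Γ be an uncountable set and let Γ = Γ₁ ∪ Γ₂ be a partition of Γ into two uncountable sets. Let A_i = {f ∈ ℓ∞^c(Γ) : 0 ≤ f(γ) ≤ 1 for all γ, and the support of f is contained in Γ_i}. Then the set A₁ ∪ (−A₂) ⊆ ℓ∞^c(Γ) has diameter 1 and radius 1; consequently the Jung constant satisfies J(ℓ∞^c(Γ)) = 2. -/
/-- `ℓ∞^c(Γ)`: the subspace of `ℓ∞(Γ)` consisting of the bounded functions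
`Γ → ℝ` with countable support. -/
noncomputable def linftyC (Γ : Type) : Submodule ℝ (lp (fun _ : Γ => ℝ) ⊤) where
  carrier := {f | (Function.support (⇑f)).Countable}
  add_mem' := by
    intro f g hf hg
    refine Set.Countable.mono ?_ (hf.union hg)
    rw [lp.coeFn_add]
    exact Function.support_add _ _
  zero_mem' := by
    have h0 : ⇑(0 : lp (fun _ : Γ => ℝ) ⊤) = (0 : ∀ _ : Γ, ℝ) := lp.coeFn_zero _ _
    have : (Function.support (⇑(0 : lp (fun _ : Γ => ℝ) ⊤))).Countable := by
      rw [h0, Function.support_zero]; exact Set.countable_empty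
    exact this
  smul_mem' := by
    intro c f hf
    refine Set.Countable.mono ?_ hf
    rw [lp.coeFn_smul]
    exact Function.support_smul_subset_right _ _

/-- The (Chebyshev) radius of a subset of a normed space:
`r(A) = inf_{b ∈ X} sup_{a ∈ A} ‖a − b‖`. -/
noncomputable def radius {X : Type} [SeminormedAddCommGroup X] (A : Set X) : ℝ :=
  ⨅ b : X, ⨆ a : A, ‖(a : X) - b‖

/-- The Jung constant `J(X) = sup {2 r(A)/δ(A) : A closed bounded, δ(A) > 0}`. -/
noncomputable def Jung (X : Type) [SeminormedAddCommGroup X] : ℝ :=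
  sSup {c : ℝ | ∃ A : Set X, IsClosed A ∧ Bornology.IsBounded A ∧
    0 < Metric.diam A ∧ c = 2 * radius A / Metric.diam A}

/-!
Since `Γ₁` and `Γ₂` are disjoint, every coordinate of a point of `S = A₁ ∪ (−A₂)` lies in `[0, 1]`
on `Γ₁` and in `[−1, 0]` off `Γ₁`, so `δ(S) ≤ 1`; also `S` lies in the closed unit ball, so
`r(S) ≤ 1`. Conversely any centre `b ∈ ℓ∞^c(Γ)` has countable support, so it vanishes at some
`γ` of the uncountable `Γ₁`, and the indicator of `γ` is a point of `S` at distance `1` from `b`;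
hence `r(S) = 1`, and `δ(S) ≥ r(S)` gives `δ(S) = 1`. Finally `r(A) ≤ δ(A)` holds for every set,
so `J ≤ 2`, and `S` attains `2 r(S) / δ(S) = 2`.
-/

section RadiusAndJung

variable {X : Type} [SeminormedAddCommGroup X]

lemma radius_le_of_subset_closedBall {A : Set X} {b : X} {r : ℝ} (hr : 0 ≤ r)
    (hA : A ⊆ Metric.closedBall b r) : radius A ≤ r :=
  (ciInf_le ⟨0, by rintro _ ⟨c, rfl⟩; exact Real.iSup_nonneg fun _ => norm_nonneg _⟩ b).trans <|
    Real.iSup_le (fun a => by simpa [dist_eq_norm] using hA a.2) hr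

lemma le_radius_of_forall_exists_le_norm_sub {A : Set X} {r : ℝ} (hA : Bornology.IsBounded A)
    (h : ∀ b : X, ∃ a ∈ A, r ≤ ‖a - b‖) : r ≤ radius A := by
  refine le_ciInf fun b => ?_
  obtain ⟨a, ha, hab⟩ := h b
  obtain ⟨C, hC⟩ := hA.exists_norm_le
  have hbdd : BddAbove (Set.range fun a : A => ‖(a : X) - b‖) :=
    ⟨C + ‖b‖, by rintro _ ⟨a, rfl⟩; exact (norm_sub_le _ _).trans (by gcongr; exact hC a a.2)⟩
  exact le_ciSup_of_le hbdd ⟨a, ha⟩ hab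

lemma radius_le_diam {A : Set X} (hb : Bornology.IsBounded A) (hne : A.Nonempty) :
    radius A ≤ Metric.diam A := by
  obtain ⟨a₀, ha₀⟩ := hne
  exact radius_le_of_subset_closedBall Metric.diam_nonneg fun a ha =>
    Metric.dist_le_diam_of_mem hb ha ha₀

lemma two_mul_radius_div_diam_le_two {A : Set X} (hb : Bornology.IsBounded A)
    (hd : 0 < Metric.diam A) : 2 * radius A / Metric.diam A ≤ 2 := by
  have hne : A.Nonempty := Set.nonempty_iff_ne_empty.2 fun h => by simp [h] at hd
  rw [div_le_iff₀ hd]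
  linarith [radius_le_diam hb hne]

lemma Jung_le_two : Jung X ≤ 2 :=
  Real.sSup_le (by rintro _ ⟨A, -, hb, hd, rfl⟩; exact two_mul_radius_div_diam_le_two hb hd)
    zero_le_two

lemma Jung_eq_two_of_radius_eq_diam {A : Set X} (hc : IsClosed A) (hb : Bornology.IsBounded A)
    (hd : 0 < Metric.diam A) (hr : radius A = Metric.diam A) : Jung X = 2 := by
  refine le_antisymm Jung_le_two (le_csSup ⟨2, ?_⟩ ⟨A, hc, hb, hd, ?_⟩)
  · rintro _ ⟨B, -, hB, hdB, rfl⟩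
    exact two_mul_radius_div_diam_le_two hB hdB
  · rw [hr, mul_div_assoc, div_self hd.ne', mul_one]

end RadiusAndJung

namespace linftyC

open scoped Classical

variable {Γ : Type}

local notation "ℓ∞(" Γ ")" => lp (fun _ : Γ => ℝ) ⊤

lemma abs_apply_le_norm (f : linftyC Γ) (γ : Γ) : |(f : ℓ∞(Γ)) γ| ≤ ‖f‖ :=
  lp.norm_apply_le_norm ENNReal.top_ne_zero (f : ℓ∞(Γ)) γ

lemma norm_le_of_forall_abs_apply_le (f : linftyC Γ) {C : ℝ} (hC : 0 ≤ C)
    (h : ∀ γ, |(f : ℓ∞(Γ)) γ| ≤ C) : ‖f‖ ≤ C :=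
  lp.norm_le_of_forall_le hC h

lemma continuous_apply (γ : Γ) : Continuous fun f : linftyC Γ => (f : ℓ∞(Γ)) γ :=
  (_root_.continuous_apply γ).comp (lp.uniformContinuous_coe.continuous.comp continuous_subtype_val)

lemma norm_sub_le_of_forall_mem_Icc {f g : linftyC Γ} {c : Γ → ℝ} {r : ℝ} (hr : 0 ≤ r)
    (hf : ∀ γ, (f : ℓ∞(Γ)) γ ∈ Set.Icc (c γ) (c γ + r))
    (hg : ∀ γ, (g : ℓ∞(Γ)) γ ∈ Set.Icc (c γ) (c γ + r)) : ‖f - g‖ ≤ r :=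
  norm_le_of_forall_abs_apply_le _ hr fun γ => by
    simpa [← Real.dist_eq] using Real.dist_le_of_mem_Icc (hf γ) (hg γ)

lemma exists_apply_eq_zero_of_not_countable (f : linftyC Γ) {T : Set Γ} (hT : ¬ T.Countable) :
    ∃ γ ∈ T, (f : ℓ∞(Γ)) γ = 0 := by
  by_contra! h
  exact hT (f.2.mono fun γ hγ => Function.mem_support.2 (h γ hγ))

noncomputable def single (γ₀ : Γ) : linftyC Γ :=
  ⟨lp.single ⊤ γ₀ 1, (Set.countable_singleton γ₀).mono fun γ hγ => by
    by_contra h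
    exact hγ (Pi.single_eq_of_ne h _)⟩

lemma single_apply (γ₀ γ : Γ) : (single γ₀ : ℓ∞(Γ)) γ = if γ = γ₀ then 1 else 0 := by
  simp only [single, lp.single_apply, Pi.single_apply]

/-- The paper's `A_i` is `cubeOn Γᵢ`. -/
def cubeOn (T : Set Γ) : Set (linftyC Γ) :=
  {f | (∀ γ, 0 ≤ (f : ℓ∞(Γ)) γ ∧ (f : ℓ∞(Γ)) γ ≤ 1) ∧ Function.support ⇑(f : ℓ∞(Γ)) ⊆ T}

variable {T T₁ T₂ : Set Γ} {f : linftyC Γ}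

lemma apply_mem_Icc_of_mem_cubeOn (hf : f ∈ cubeOn T) (γ : Γ) :
    (f : ℓ∞(Γ)) γ ∈ Set.Icc 0 1 :=
  hf.1 γ

lemma apply_eq_zero_of_mem_cubeOn (hf : f ∈ cubeOn T) {γ : Γ} (hγ : γ ∉ T) :
    (f : ℓ∞(Γ)) γ = 0 :=
  Function.notMem_support.1 fun h => hγ (hf.2 h)

lemma norm_le_one_of_mem_cubeOn (hf : f ∈ cubeOn T) : ‖f‖ ≤ 1 :=
  norm_le_of_forall_abs_apply_le _ zero_le_one fun γ =>
    abs_le.2 ⟨by linarith [(hf.1 γ).1], (hf.1 γ).2⟩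

lemma zero_mem_cubeOn : (0 : linftyC Γ) ∈ cubeOn T :=
  ⟨fun _ => ⟨le_rfl, zero_le_one⟩, fun _ h => (h rfl).elim⟩

lemma single_mem_cubeOn {γ₀ : Γ} (h : γ₀ ∈ T) : single γ₀ ∈ cubeOn T := by
  refine ⟨fun γ => ?_, fun γ hγ => ?_⟩
  · rw [single_apply]; split_ifs <;> norm_num
  · rw [Function.mem_support, single_apply] at hγ
    split_ifs at hγ with h'
    exacts [h' ▸ h, (hγ rfl).elim]

lemma isClosed_cubeOn (T : Set Γ) : IsClosed (cubeOn T) := by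
  have : cubeOn T = (⋂ γ, (fun f : linftyC Γ => (f : ℓ∞(Γ)) γ) ⁻¹' Set.Icc 0 1) ∩
      ⋂ γ ∈ Tᶜ, (fun f : linftyC Γ => (f : ℓ∞(Γ)) γ) ⁻¹' {0} := by
    ext f
    simp only [cubeOn, Function.support_subset_iff', Set.mem_ofPred_eq, Set.mem_inter_iff,
      Set.mem_iInter, Set.mem_preimage, Set.mem_Icc, Set.mem_compl_iff, Set.mem_singleton_iff]
  rw [this]
  exact (isClosed_iInter fun γ => isClosed_Icc.preimage (continuous_apply γ)).inter
    (isClosed_biInter fun γ _ => isClosed_singleton.preimage (continuous_apply γ))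

lemma apply_mem_Icc_of_mem_cubeOn_union_neg (hT : Disjoint T₁ T₂)
    (hf : f ∈ cubeOn T₁ ∪ -cubeOn T₂) (γ : Γ) :
    (f : ℓ∞(Γ)) γ ∈ Set.Icc (if γ ∈ T₁ then 0 else -1) ((if γ ∈ T₁ then 0 else -1) + 1) := by
  rcases hf with hf | hf
  · have := apply_mem_Icc_of_mem_cubeOn hf γ
    split_ifs with hγ
    · simpa using this
    · simp [apply_eq_zero_of_mem_cubeOn hf hγ]
  · have hneg : ∀ γ, (f : ℓ∞(Γ)) γ = -((-f : linftyC Γ) : ℓ∞(Γ)) γ := fun γ => by simp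
    have := apply_mem_Icc_of_mem_cubeOn hf γ
    split_ifs with hγ
    · rw [hneg γ, apply_eq_zero_of_mem_cubeOn hf (hT.notMem_of_mem_left hγ)]
      norm_num
    · rw [hneg γ]; constructor <;> linarith [this.1, this.2]

lemma norm_sub_le_one_of_mem_cubeOn_union_neg (hT : Disjoint T₁ T₂) {g : linftyC Γ}
    (hf : f ∈ cubeOn T₁ ∪ -cubeOn T₂) (hg : g ∈ cubeOn T₁ ∪ -cubeOn T₂) : ‖f - g‖ ≤ 1 :=
  norm_sub_le_of_forall_mem_Icc zero_le_one (apply_mem_Icc_of_mem_cubeOn_union_neg hT hf)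
    (apply_mem_Icc_of_mem_cubeOn_union_neg hT hg)

lemma cubeOn_union_neg_subset_closedBall :
    cubeOn T₁ ∪ -cubeOn T₂ ⊆ Metric.closedBall (0 : linftyC Γ) 1 := by
  rintro f (hf | hf) <;> rw [mem_closedBall_zero_iff]
  exacts [norm_le_one_of_mem_cubeOn hf, norm_neg f ▸ norm_le_one_of_mem_cubeOn hf]

lemma isBounded_cubeOn_union_neg : Bornology.IsBounded (cubeOn T₁ ∪ -cubeOn T₂) :=
  Metric.isBounded_closedBall.subset cubeOn_union_neg_subset_closedBall

lemma isClosed_cubeOn_union_neg : IsClosed (cubeOn T₁ ∪ -cubeOn T₂) :=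
  (isClosed_cubeOn T₁).union (isClosed_cubeOn T₂).neg

lemma radius_cubeOn_union_neg (hT₁ : ¬ T₁.Countable) : radius (cubeOn T₁ ∪ -cubeOn T₂) = 1 := by
  refine le_antisymm
    (radius_le_of_subset_closedBall zero_le_one cubeOn_union_neg_subset_closedBall)
    (le_radius_of_forall_exists_le_norm_sub isBounded_cubeOn_union_neg fun b => ?_)
  obtain ⟨γ, hγ, hbγ⟩ := exists_apply_eq_zero_of_not_countable b hT₁
  refine ⟨single γ, Or.inl (single_mem_cubeOn hγ), ?_⟩
  simpa [single_apply, hbγ] using abs_apply_le_norm (single γ - b) γ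

lemma diam_cubeOn_union_neg (hT : Disjoint T₁ T₂) (hT₁ : ¬ T₁.Countable) :
    Metric.diam (cubeOn T₁ ∪ -cubeOn T₂) = 1 := by
  refine le_antisymm (Metric.diam_le_of_forall_dist_le zero_le_one fun f hf g hg => ?_) ?_
  · rw [dist_eq_norm]
    exact norm_sub_le_one_of_mem_cubeOn_union_neg hT hf hg
  · rw [← radius_cubeOn_union_neg (T₂ := T₂) hT₁]
    exact radius_le_diam isBounded_cubeOn_union_neg ⟨0, Or.inl zero_mem_cubeOn⟩

end linftyC

theorem jung_linftyC_eq_two_general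
    (Γ : Type)
    (Γ₁ Γ₂ : Set Γ) (hdisj : Γ₁ ∩ Γ₂ = ∅)
    (h₁ : ¬ Γ₁.Countable)
    (A : Fin 2 → Set ↥(linftyC Γ))
    (hA : ∀ i : Fin 2, A i = {f : ↥(linftyC Γ) |
      (∀ γ : Γ, 0 ≤ (f : lp (fun _ : Γ => ℝ) ⊤) γ ∧ (f : lp (fun _ : Γ => ℝ) ⊤) γ ≤ 1) ∧
      Function.support (⇑(f : lp (fun _ : Γ => ℝ) ⊤)) ⊆ (if i = 0 then Γ₁ else Γ₂)}) :
    Metric.diam (A 0 ∪ -(A 1)) = 1 ∧ radius (A 0 ∪ -(A 1)) = 1 ∧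
      Jung ↥(linftyC Γ) = 2 := by
  have hA₀ : A 0 = linftyC.cubeOn Γ₁ := hA 0
  have hA₁ : A 1 = linftyC.cubeOn Γ₂ := hA 1
  have hdiam := linftyC.diam_cubeOn_union_neg (Set.disjoint_iff_inter_eq_empty.2 hdisj) h₁
  have hrad := linftyC.radius_cubeOn_union_neg (T₂ := Γ₂) h₁
  rw [hA₀, hA₁]
  exact ⟨hdiam, hrad, Jung_eq_two_of_radius_eq_diam linftyC.isClosed_cubeOn_union_neg
    linftyC.isBounded_cubeOn_union_neg (hdiam ▸ one_pos) (hrad.trans hdiam.symm)⟩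

/-- For an uncountable `Γ` split into two uncountable pieces `Γ₁ ∪ Γ₂`, the set
`A₁ ∪ (−A₂)` of `[0,1]`-valued countably supported functions supported in `Γ₁`
(resp. negatives of those supported in `Γ₂`) has diameter 1 and radius 1 in
`ℓ∞^c(Γ)`; consequently `J(ℓ∞^c(Γ)) = 2`. -/
theorem jung_linftyC_eq_two
    (Γ : Type) (hΓ : ¬ (Set.univ : Set Γ).Countable)
    (Γ₁ Γ₂ : Set Γ) (hunion : Γ₁ ∪ Γ₂ = Set.univ) (hdisj : Γ₁ ∩ Γ₂ = ∅)
    (h₁ : ¬ Γ₁.Countable) (h₂ : ¬ Γ₂.Countable)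
    (A : Fin 2 → Set ↥(linftyC Γ))
    (hA : ∀ i : Fin 2, A i = {f : ↥(linftyC Γ) |
      (∀ γ : Γ, 0 ≤ (f : lp (fun _ : Γ => ℝ) ⊤) γ ∧ (f : lp (fun _ : Γ => ℝ) ⊤) γ ≤ 1) ∧
      Function.support (⇑(f : lp (fun _ : Γ => ℝ) ⊤)) ⊆ (if i = 0 then Γ₁ else Γ₂)}) :
    Metric.diam (A 0 ∪ -(A 1)) = 1 ∧ radius (A 0 ∪ -(A 1)) = 1 ∧
      Jung ↥(linftyC Γ) = 2 :=
  jung_linftyC_eq_two_general Γ Γ₁ Γ₂ hdisj h₁ A hA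
end

section
/- The Jung constant of the quotient Banach space ℓ∞/c0 equals 2; more precisely, for every r < 1 there exists a subset A of ℓ∞/c0 of diameter at most 1 that is not contained in any closed ball of radius r. -/
open Filter

/-- `c₀`: the subspace of `ℓ∞` of real sequences converging to `0`. -/
noncomputable def c0 : Submodule ℝ (lp (fun _ : ℕ => ℝ) ⊤) where
  carrier := {f | Tendsto (⇑f) atTop (nhds 0)}
  add_mem' := by
    intro f g hf hg
    show Tendsto (⇑(f + g)) atTop (nhds 0)
    have hadd : ⇑(f + g) = ⇑f + ⇑g := lp.coeFn_add f g
    rw [hadd]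
    have h2 := hf.add hg
    rw [add_zero] at h2
    exact h2
  zero_mem' := by
    have h0 : ⇑(0 : lp (fun _ : ℕ => ℝ) ⊤) = (0 : ∀ _ : ℕ, ℝ) := lp.coeFn_zero _ _
    show Tendsto _ atTop (nhds 0)
    rw [h0]
    exact tendsto_const_nhds
  smul_mem' := by
    intro c f hf
    show Tendsto (⇑(c • f)) atTop (nhds 0)
    have hsmul : ⇑(c • f) = c • ⇑f := lp.coeFn_smul c f
    rw [hsmul]
    have h2 := hf.const_smul c
    rw [smul_zero] at h2
    exact h2

/-!
Index the coordinates of `ℓ∞` by the nodes of the binary tree, i.e. by (codes of) finite words.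
A branch `x : ℕ → Bool` gives the vector that is `±1` on the nodes of `x` and `0` elsewhere, the
sign being `+1` iff `x` takes the value `true` infinitely often. Two distinct branches share only
finitely many nodes, so their classes in `ℓ∞/c₀` are at distance at most `1`. If some `b` were at
distance `< 1` from all of them, then along every branch the sign of `b` would eventually be the
sign of the branch. The dense and codense set of branches with infinitely many `true`s would then
be separated by a sequence of clopen sets in the sense of "eventually in / eventually out", which
the Baire category theorem forbids. So the closure of the family has diameter `1` and radius `1`,
while `r(A) ≤ δ(A)` holds in every space.
-/

open Set Metric Topology

section Radius

variable {X : Type} [SeminormedAddCommGroup X] {A : Set X}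

lemma radius_le_diam_s6 (hA : Bornology.IsBounded A) {a₀ : X} (ha₀ : a₀ ∈ A) :
    radius A ≤ diam A := by
  refine ciInf_le_of_le ⟨0, ?_⟩ a₀ (Real.iSup_le (fun a => ?_) diam_nonneg)
  · rintro _ ⟨b, rfl⟩
    exact Real.iSup_nonneg fun _ => norm_nonneg _
  · rw [← dist_eq_norm]
    exact dist_le_diam_of_mem hA a.2 ha₀

lemma le_radius_of_forall_not_subset_closedBall (hA : Bornology.IsBounded A) {r : ℝ}
    (h : ∀ b, ¬ A ⊆ closedBall b r) : r ≤ radius A := by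
  refine le_ciInf fun b => ?_
  obtain ⟨a, ha, hab⟩ := not_subset.1 (h b)
  have hbdd : BddAbove (range fun a : A => ‖(a : X) - b‖) := by
    obtain ⟨C, hC⟩ := (hA.subset_closedBall b)
    exact ⟨C, by rintro _ ⟨a, rfl⟩; simpa [dist_eq_norm] using hC a.2⟩
  rw [mem_closedBall, dist_eq_norm, not_le] at hab
  exact hab.le.trans (le_ciSup hbdd ⟨a, ha⟩)

lemma two_mul_radius_div_diam_le_two_s6 (hA : Bornology.IsBounded A) :
    2 * radius A / diam A ≤ 2 := by
  rcases A.eq_empty_or_nonempty with rfl | ⟨a₀, ha₀⟩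
  · simp
  · exact div_le_of_le_mul₀ diam_nonneg zero_le_two (by linarith [radius_le_diam_s6 hA ha₀])

lemma jung_eq_two_of_forall_not_subset_closedBall (hA : Bornology.IsBounded A)
    (hdiam : diam A ≤ 1) (hfar : ∀ r < 1, ∀ b, ¬ A ⊆ closedBall b r) : Jung X = 2 := by
  obtain ⟨a₀, ha₀⟩ : A.Nonempty :=
    nonempty_iff_ne_empty.2 <| by rintro rfl; exact hfar 0 one_pos 0 (empty_subset _)
  have hdiam_eq : diam A = 1 := by
    refine le_antisymm hdiam (not_lt.1 fun hlt => hfar _ hlt a₀ fun a ha => ?_)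
    exact mem_closedBall.2 (dist_le_diam_of_mem hA ha ha₀)
  have hrad : radius (closure A) = 1 := by
    refine le_antisymm ?_ (le_of_forall_lt_imp_le_of_dense fun r hr => ?_)
    · simpa [diam_closure, hdiam_eq] using radius_le_diam_s6 hA.closure (subset_closure ha₀)
    · exact le_radius_of_forall_not_subset_closedBall hA.closure fun b hb =>
        hfar r hr b (subset_closure.trans hb)
  refine IsGreatest.csSup_eq ⟨⟨closure A, isClosed_closure, hA.closure, ?_, ?_⟩, ?_⟩
  · simp [diam_closure, hdiam_eq]
  · simp [diam_closure, hdiam_eq, hrad]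
  · rintro _ ⟨S, -, hS, -, rfl⟩
    exact two_mul_radius_div_diam_le_two_s6 hS

end Radius

lemma Dense.exists_frequently_mem_of_eventually_mem {X : Type*} [TopologicalSpace X]
    [BaireSpace X] [Nonempty X] {D : Set X} (hD : Dense D) (hDc : Dense Dᶜ) {U : ℕ → Set X}
    (hU : ∀ n, IsClopen (U n)) (hmem : ∀ x ∈ D, ∀ᶠ n in atTop, x ∈ U n) :
    ∃ x ∉ D, ∃ᶠ n in atTop, x ∈ U n := by
  by_contra! hnot
  -- `F true N ⊆ D` and `F false N ⊆ Dᶜ` have empty interior, yet together they cover `X`.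
  let F : Bool → ℕ → Set X := fun b N => ⋂ n ≥ N, {x | x ∈ U n ↔ b = true}
  have hF : ∀ b N, IsClosed (F b N) := by
    intro b N
    refine isClosed_biInter fun n _ => ?_
    cases b
    · simp only [Bool.false_eq_true, iff_false]
      exact (hU n).compl.isClosed
    · simpa using (hU n).isClosed
  have hcover : ⋃ p : Bool × ℕ, F p.1 p.2 = univ := by
    refine eq_univ_of_forall fun x => mem_iUnion.2 ?_
    by_cases hx : x ∈ D
    · obtain ⟨N, hN⟩ := eventually_atTop.1 (hmem x hx)
      exact ⟨(true, N), mem_iInter₂.2 fun n hn => by simpa using hN n hn⟩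
    · obtain ⟨N, hN⟩ := eventually_atTop.1 (hnot x hx)
      exact ⟨(false, N), mem_iInter₂.2 fun n hn => by simpa using hN n hn⟩
  obtain ⟨⟨b, N⟩, x, hx⟩ :=
    nonempty_interior_of_iUnion_of_closed (fun p : Bool × ℕ => hF p.1 p.2) hcover
  have hF_iff : ∀ z ∈ F b N, z ∈ D ↔ b = true := by
    intro z hz
    have hev : ∀ᶠ n in atTop, z ∈ U n ↔ b = true :=
      eventually_atTop.2 ⟨N, fun n hn => mem_iInter₂.1 hz n hn⟩
    refine ⟨fun hzD => ?_, fun hb => not_not.1 fun hzD => ?_⟩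
    · obtain ⟨n, hzU, hiff⟩ := ((hmem z hzD).and hev).exists
      exact hiff.1 hzU
    · obtain ⟨n, hzU, hiff⟩ := ((hnot z hzD).and hev).exists
      exact hzU (hiff.2 hb)
  cases b
  · obtain ⟨y, hy, hyD⟩ := hD.inter_open_nonempty _ isOpen_interior ⟨x, hx⟩
    exact Bool.false_ne_true ((hF_iff y (interior_subset hy)).1 hyD)
  · obtain ⟨y, hy, hyD⟩ := hDc.inter_open_nonempty _ isOpen_interior ⟨x, hx⟩
    exact hyD ((hF_iff y (interior_subset hy)).2 rfl)

lemma dense_setOf_eventuallyEq {α : Type*} [TopologicalSpace α] (y : ℕ → α) :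
    Dense {x : ℕ → α | x =ᶠ[atTop] y} := by
  intro x
  refine mem_closure_of_tendsto (b := atTop) (f := fun n i => if i < n then x i else y i)
    (tendsto_pi_nhds.2 fun i => tendsto_const_nhds.congr' ?_) (Eventually.of_forall fun n => ?_)
  · filter_upwards [eventually_gt_atTop i] with n hn
    simp [hn]
  · filter_upwards [eventually_ge_atTop n] with i hi
    simp [not_lt.2 hi]

section NodeIndex

variable {α : Type*} [Encodable α]

def nodeIndex (x : ℕ → α) (n : ℕ) : ℕ := Encodable.encode (List.ofFn fun i : Fin n => x i)

lemma nodeIndex_eq_nodeIndex {x y : ℕ → α} {m n : ℕ} (h : nodeIndex x m = nodeIndex y n) :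
    m = n ∧ ∀ i < m, x i = y i := by
  have h' := Encodable.encode_injective h
  obtain rfl : m = n := by simpa using congrArg List.length h'
  exact ⟨rfl, fun i hi => congrFun (List.ofFn_injective h') ⟨i, hi⟩⟩

lemma tendsto_nodeIndex_atTop (x : ℕ → α) : Tendsto (nodeIndex x) atTop atTop :=
  Function.Injective.nat_tendsto_atTop fun _ _ h => (nodeIndex_eq_nodeIndex h).1

lemma finite_range_nodeIndex_inter {x y : ℕ → α} (hxy : x ≠ y) :
    (range (nodeIndex x) ∩ range (nodeIndex y)).Finite := by
  obtain ⟨j, hj⟩ := Function.ne_iff.1 hxy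
  refine ((finite_Iic j).image (nodeIndex x)).subset ?_
  rintro _ ⟨⟨n, rfl⟩, m, hm⟩
  obtain ⟨rfl, hagree⟩ := nodeIndex_eq_nodeIndex hm
  exact ⟨m, not_lt.1 fun hjm => hj (hagree j hjm).symm, rfl⟩

lemma continuous_nodeIndex [TopologicalSpace α] [DiscreteTopology α] (n : ℕ) :
    Continuous fun x : ℕ → α => nodeIndex x n :=
  (continuous_of_discreteTopology (f := fun v : Fin n → α => Encodable.encode (List.ofFn v))).comp
    (continuous_pi fun i => continuous_apply (i : ℕ))

end NodeIndex

lemma exists_not_frequently_true_of_eventually_nodeIndex (Q : ℕ → Prop)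
    (hQ : ∀ x : ℕ → Bool, (∃ᶠ n in atTop, x n = true) → ∀ᶠ n in atTop, Q (nodeIndex x n)) :
    ∃ x : ℕ → Bool, ¬ (∃ᶠ n in atTop, x n = true) ∧ ∃ᶠ n in atTop, Q (nodeIndex x n) := by
  refine Dense.exists_frequently_mem_of_eventually_mem (U := fun n => {x | Q (nodeIndex x n)})
    ((dense_setOf_eventuallyEq fun _ => true).mono fun x hx => hx.frequently)
    ((dense_setOf_eventuallyEq fun _ => false).mono fun x hx hfreq => ?_)
    (fun n => (isClopen_discrete {k | Q k}).preimage (continuous_nodeIndex n)) hQ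
  obtain ⟨n, htrue, hfalse⟩ := (Frequently.and_eventually hfreq hx).exists
  exact Bool.noConfusion (htrue.symm.trans hfalse)

local notation "ℓ∞" => lp (fun _ : ℕ => ℝ) ⊤

lemma abs_apply_le_norm (f : ℓ∞) (k : ℕ) : |f k| ≤ ‖f‖ :=
  lp.norm_apply_le_norm ENNReal.top_ne_zero f k

lemma mem_c0 {f : ℓ∞} : f ∈ c0 ↔ Tendsto (⇑f) atTop (𝓝 0) := Iff.rfl

lemma norm_mk_eq_infDist (f : ℓ∞) : ‖Submodule.Quotient.mk (p := c0) f‖ = infDist f c0 :=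
  QuotientAddGroup.norm_mk (S := c0.toAddSubgroup) f

lemma norm_mk_le_of_eventually_abs_le (f : ℓ∞) {C : ℝ} (h : ∀ᶠ k in atTop, |f k| ≤ C) :
    ‖Submodule.Quotient.mk (p := c0) f‖ ≤ C := by
  obtain ⟨K, hK⟩ := eventually_atTop.1 h
  have hC : 0 ≤ C := (abs_nonneg _).trans (hK K le_rfl)
  have htail : ∀ k, |if k < K then 0 else f k| ≤ C := fun k => by
    split_ifs with hk
    · simpa using hC
    · exact hK k (not_lt.1 hk)
  let tail : ℓ∞ := ⟨fun k => if k < K then 0 else f k, memℓp_infty ⟨C, by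
    rintro _ ⟨k, rfl⟩; exact htail k⟩⟩
  have hmk : Submodule.Quotient.mk (p := c0) f = Submodule.Quotient.mk tail := by
    refine (Submodule.Quotient.eq c0).2 (tendsto_const_nhds.congr' ?_)
    filter_upwards [eventually_ge_atTop K] with k hk
    simp only [tail, lp.coeFn_sub]
    rw [Pi.sub_apply, if_neg (not_lt.2 hk), sub_self]
  rw [hmk]
  exact (Submodule.Quotient.norm_mk_le c0 tail).trans (lp.norm_le_of_forall_le hC htail)

lemma le_norm_mk_of_frequently_le_abs (f : ℓ∞) {C : ℝ} (h : ∃ᶠ k in atTop, C ≤ |f k|) :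
    C ≤ ‖Submodule.Quotient.mk (p := c0) f‖ := by
  rw [norm_mk_eq_infDist, le_infDist ⟨0, c0.zero_mem⟩]
  intro g hg
  refine le_of_forall_pos_le_add fun ε hε => ?_
  obtain ⟨k, hCk, hgk⟩ :=
    (h.and_eventually (tendsto_nhds.1 (mem_c0.1 hg) ε hε)).exists
  rw [Real.dist_0_eq_abs] at hgk
  calc C ≤ |f k| := hCk
    _ ≤ |f k - g k| + |g k| := by linarith [abs_sub_abs_le_abs_sub (f k) (g k)]
    _ ≤ dist f g + ε := by
      gcongr
      rw [dist_eq_norm]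
      exact abs_apply_le_norm (f - g) k

open Classical in
noncomputable def branchSign (x : ℕ → Bool) : ℝ := if ∃ᶠ n in atTop, x n = true then 1 else -1

lemma abs_branchSign (x : ℕ → Bool) : |branchSign x| = 1 := by
  unfold branchSign; split_ifs <;> simp

noncomputable def branchVec (x : ℕ → Bool) : ℓ∞ :=
  ⟨(range (nodeIndex x)).indicator fun _ => branchSign x, memℓp_infty ⟨1, by
    rintro _ ⟨k, rfl⟩
    exact (norm_indicator_le_norm_self _ k).trans (abs_branchSign x).le⟩⟩

lemma branchVec_apply_nodeIndex (x : ℕ → Bool) (n : ℕ) :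
    branchVec x (nodeIndex x n) = branchSign x :=
  indicator_of_mem (mem_range_self (f := nodeIndex x) n) (fun _ => branchSign x)

lemma dist_mk_branchVec_le_one (x y : ℕ → Bool) :
    dist (Submodule.Quotient.mk (p := c0) (branchVec x)) (Submodule.Quotient.mk (branchVec y))
      ≤ 1 := by
  rcases eq_or_ne x y with rfl | hxy
  · simp
  rw [dist_eq_norm, ← Submodule.Quotient.mk_sub]
  refine norm_mk_le_of_eventually_abs_le _ ?_
  have hk := (finite_range_nodeIndex_inter hxy).eventually_cofinite_notMem
  rw [Nat.cofinite_eq_atTop] at hk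
  filter_upwards [hk] with k hk
  simp only [branchVec, lp.coeFn_sub, Pi.sub_apply]
  by_cases hx : k ∈ range (nodeIndex x) <;> by_cases hy : k ∈ range (nodeIndex y)
  · exact absurd ⟨hx, hy⟩ hk
  all_goals simp [hx, hy, abs_branchSign]

lemma exists_one_le_dist_mk_branchVec (b : ℓ∞) :
    ∃ x, 1 ≤ dist (Submodule.Quotient.mk (p := c0) (branchVec x)) (Submodule.Quotient.mk b) := by
  simp only [dist_eq_norm, ← Submodule.Quotient.mk_sub]
  by_contra! hnear
  have hclose : ∀ x, ∀ᶠ n in atTop, |branchSign x - b (nodeIndex x n)| < 1 := by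
    intro x
    have hev := not_frequently.1 (mt (le_norm_mk_of_frequently_le_abs _) (not_le.2 (hnear x)))
    filter_upwards [(tendsto_nodeIndex_atTop x).eventually hev] with n hn
    simpa [branchVec_apply_nodeIndex] using hn
  obtain ⟨x, hx, hfreq⟩ := exists_not_frequently_true_of_eventually_nodeIndex (fun k => 0 < b k)
    fun x hx => (hclose x).mono fun n hn => by
      rw [branchSign, if_pos hx] at hn
      linarith [(abs_lt.1 hn).2]
  obtain ⟨n, hpos, hn⟩ := (hfreq.and_eventually (hclose x)).exists
  rw [branchSign, if_neg hx] at hn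
  linarith [(abs_lt.1 hn).1]

/-- The Jung constant of `ℓ∞/c₀` equals 2; more precisely, for every `r < 1` there is
a subset of `ℓ∞/c₀` of diameter at most 1 not contained in any closed ball of radius
`r`. -/
theorem jung_linfty_mod_c0_eq_two :
    Jung ((lp (fun _ : ℕ => ℝ) ⊤) ⧸ c0) = 2 ∧
    ∀ r : ℝ, r < 1 →
      ∃ A : Set ((lp (fun _ : ℕ => ℝ) ⊤) ⧸ c0),
        Metric.diam A ≤ 1 ∧ ∀ h : (lp (fun _ : ℕ => ℝ) ⊤) ⧸ c0,
          ¬ A ⊆ Metric.closedBall h r := by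
  set A := range fun x => Submodule.Quotient.mk (p := c0) (branchVec x)
  have hdist : ∀ p ∈ A, ∀ q ∈ A, dist p q ≤ 1 := by
    rintro _ ⟨x, rfl⟩ _ ⟨y, rfl⟩
    exact dist_mk_branchVec_le_one x y
  have hdiam : diam A ≤ 1 := diam_le_of_forall_dist_le zero_le_one hdist
  have hfar : ∀ r < 1, ∀ h, ¬ A ⊆ closedBall h r := by
    intro r hr h hsub
    obtain ⟨b, rfl⟩ := Submodule.Quotient.mk_surjective c0 h
    obtain ⟨x, hx⟩ := exists_one_le_dist_mk_branchVec b
    linarith [mem_closedBall.1 (hsub ⟨x, rfl⟩)]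
  exact ⟨jung_eq_two_of_forall_not_subset_closedBall (isBounded_iff.2 ⟨1, hdist⟩) hdiam hfar,
    fun r hr => ⟨A, hdiam, hfar r hr⟩⟩
end

section
/- Let K be a compact Hausdorff space and let e : ℕ → K be a topological embedding with dense image (a compactification of ℕ). If K is an F-space, i.e., any two disjoint open Fσ-subsets of K have disjoint closures, then the canonical continuous surjection from the Stone–Čech compactification βℕ onto K extending e is a homeomorphism. -/
/-- A set is Fσ if it is a countable union of closed sets. -/
def IsFSigma {K : Type} [TopologicalSpace K] (s : Set K) : Prop :=
  ∃ f : ℕ → Set K, (∀ n, IsClosed (f n)) ∧ s = ⋃ n, f n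

/-- A compact Hausdorff space is an F-space if any two disjoint open Fσ-subsets have
disjoint closures. -/
def IsFSpace (K : Type) [TopologicalSpace K] : Prop :=
  ∀ U V : Set K, IsOpen U → IsOpen V → IsFSigma U → IsFSigma V → Disjoint U V →
    Disjoint (closure U) (closure V)

/-!
Points `x ≠ y` of `βℕ` are separated by disjoint open sets, whose traces on `ℕ` are disjoint
sets `A, B` with `x ∈ cl A`, `y ∈ cl B`. In `K` the images `e '' A`, `e '' B` are open (points of a
dense discrete subspace are isolated) and Fσ (they are countable), so the F-space property
separates their closures, which contain the images of `x` and `y`. Surjectivity holds for any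
compactification: the image of `βℕ` is compact and dense.
-/

open Set Topology

section DenseRange

variable {X K : Type*} [TopologicalSpace X] [TopologicalSpace K]

lemma Topology.IsInducing.isOpen_image_of_isClosed_image {e : X → K} (he : IsInducing e)
    (hdense : DenseRange e) {s : Set X} (hs : IsOpen s) (hclosed : IsClosed (e '' s)) :
    IsOpen (e '' s) := by
  obtain ⟨U, hU, rfl⟩ := he.isOpen_iff.1 hs
  have hUsub : U ⊆ e '' (e ⁻¹' U) :=
    (hdense.subset_closure_image_preimage_of_isOpen hU).trans hclosed.closure_subset
  rwa [← hUsub.antisymm (image_preimage_subset e U)]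

lemma Topology.IsInducing.isOpen_image_of_discrete [DiscreteTopology X] [T1Space K] {e : X → K}
    (he : IsInducing e) (hdense : DenseRange e) (s : Set X) : IsOpen (e '' s) := by
  rw [← biUnion_of_singleton s, image_iUnion₂]
  refine isOpen_biUnion fun x _ => he.isOpen_image_of_isClosed_image hdense (isOpen_discrete _) ?_
  rw [image_singleton]
  exact isClosed_singleton

end DenseRange

lemma isFSigma_image_nat {K : Type} [TopologicalSpace K] [T1Space K] (e : ℕ → K) (A : Set ℕ) :
    IsFSigma (e '' A) := by
  refine ⟨fun n => e '' (A ∩ {n}), fun n => ?_, ?_⟩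
  · exact ((subsingleton_singleton.anti inter_subset_right).image e).isClosed
  · rw [← image_iUnion, ← inter_iUnion, iUnion_of_singleton, inter_univ]

lemma IsFSpace.disjoint_closure_image {K : Type} [TopologicalSpace K] [T1Space K]
    (hF : IsFSpace K) {e : ℕ → K} (he : IsEmbedding e) (hdense : DenseRange e) {A B : Set ℕ}
    (hAB : Disjoint A B) : Disjoint (closure (e '' A)) (closure (e '' B)) :=
  hF _ _ (he.isInducing.isOpen_image_of_discrete hdense A)
    (he.isInducing.isOpen_image_of_discrete hdense B) (isFSigma_image_nat e A)
    (isFSigma_image_nat e B) ((disjoint_image_iff he.injective).2 hAB)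

section StoneCech

variable {α β : Type*} [TopologicalSpace α] [TopologicalSpace β] [CompactSpace β] [T2Space β]

lemma StoneCech.exists_disjoint_mem_closure_image {x y : StoneCech α} (hxy : x ≠ y) :
    ∃ A B : Set α, Disjoint A B ∧ x ∈ closure (stoneCechUnit '' A) ∧
      y ∈ closure (stoneCechUnit '' B) := by
  obtain ⟨U, V, hU, hV, hxU, hyV, hUV⟩ := t2_separation hxy
  exact ⟨_, _, hUV.preimage _,
    denseRange_stoneCechUnit.subset_closure_image_preimage_of_isOpen hU hxU,
    denseRange_stoneCechUnit.subset_closure_image_preimage_of_isOpen hV hyV⟩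

lemma stoneCechExtend_mem_closure_image {g : α → β} (hg : Continuous g) {x : StoneCech α}
    {A : Set α} (hx : x ∈ closure (stoneCechUnit '' A)) :
    stoneCechExtend hg x ∈ closure (g '' A) := by
  have himage : stoneCechExtend hg '' (stoneCechUnit '' A) = g '' A := by
    simp only [image_image, stoneCechExtend_stoneCechUnit]
  exact himage ▸ image_closure_subset_closure_image (continuous_stoneCechExtend hg) (mem_image_of_mem _ hx)

lemma stoneCechExtend_injective {g : α → β} (hg : Continuous g)
    (hsep : ∀ A B : Set α, Disjoint A B → Disjoint (closure (g '' A)) (closure (g '' B))) :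
    Function.Injective (stoneCechExtend hg) := by
  intro x y hxy
  by_contra hne
  obtain ⟨A, B, hAB, hxA, hyB⟩ := StoneCech.exists_disjoint_mem_closure_image hne
  exact disjoint_left.1 (hsep A B hAB) (stoneCechExtend_mem_closure_image hg hxA)
    (hxy ▸ stoneCechExtend_mem_closure_image hg hyB)

lemma stoneCechExtend_surjective {g : α → β} (hg : Continuous g) (hdense : DenseRange g) :
    Function.Surjective (stoneCechExtend hg) := by
  have hdense' : DenseRange (stoneCechExtend hg) :=
    DenseRange.of_comp (by rwa [stoneCechExtend_extends hg])
  have hclosed : IsClosed (range (stoneCechExtend hg)) :=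
    (isCompact_range (continuous_stoneCechExtend hg)).isClosed
  rw [← range_eq_univ, ← hclosed.closure_eq]
  exact hdense'.closure_range

end StoneCech

/-- `βℕ` is the only compactification of `ℕ` that is an F-space: if `K` is a compact
Hausdorff F-space and `e : ℕ → K` is a dense embedding, then the canonical extension
`βℕ → K` of `e` is a homeomorphism. -/
theorem stoneCech_unique_F_space_compactification
    (K : Type) [TopologicalSpace K] [CompactSpace K] [T2Space K]
    (e : ℕ → K) (he : Topology.IsEmbedding e) (hdense : DenseRange e)
    (hF : IsFSpace K) :
    IsHomeomorph (stoneCechExtend he.continuous) :=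
  (isHomeomorph_iff_continuous_bijective).2
    ⟨continuous_stoneCechExtend he.continuous,
      stoneCechExtend_injective he.continuous fun _ _ => hF.disjoint_closure_image he hdense,
      stoneCechExtend_surjective he.continuous hdense⟩
end

section
/- Let X be an infinite-dimensional real Banach space and let ε > 0. For every n ∈ ℕ there exist points x_1, …, x_n in the closed unit ball of X such that K_f(X) − ε ≤ ‖x_i − x_j‖ ≤ K_f(X) + ε for all i ≠ j. -/
/-- The finite Kottman constant: the supremum of those `r > 0` such that for every
`n` the closed unit ball contains `n` points with pairwise distances `≥ r`. -/
noncomputable def KottmanF (Y : Type) [SeminormedAddCommGroup Y] : ℝ :=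
  sSup {r : ℝ | 0 < r ∧ ∀ n : ℕ, ∃ A : Finset Y, A.card = n ∧
    (∀ y ∈ A, ‖y‖ ≤ 1) ∧ ∀ y ∈ A, ∀ z ∈ A, y ≠ z → r ≤ ‖y - z‖}

/-- Two-color Ramsey numbers (upper-bound recursion). -/
def ramseyNum : ℕ → ℕ → ℕ
  | 0, _ => 0
  | _+1, 0 => 0
  | a+1, b+1 => ramseyNum a (b+1) + ramseyNum (a+1) b + 1

theorem ramsey_pair {X : Type*} (P : X → X → Prop) (hs : ∀ x y, P x y → P y x) :
    ∀ (a b : ℕ) (A : Finset X), ramseyNum a b ≤ A.card →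
      (∃ B ⊆ A, B.card = a ∧ ∀ x ∈ B, ∀ y ∈ B, x ≠ y → P x y) ∨
      (∃ B ⊆ A, B.card = b ∧ ∀ x ∈ B, ∀ y ∈ B, x ≠ y → ¬ P x y) := by
  classical
  intro a
  induction a with
  | zero =>
    intro b A _
    exact Or.inl ⟨∅, Finset.empty_subset _, Finset.card_empty, by simp⟩
  | succ a iha =>
    intro b
    induction b with
    | zero =>
      intro A _
      exact Or.inr ⟨∅, Finset.empty_subset _, Finset.card_empty, by simp⟩
    | succ b ihb =>
      intro A hA
      rw [ramseyNum] at hA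
      have hAne : A.Nonempty := Finset.card_pos.mp (by omega)
      obtain ⟨v, hv⟩ := hAne
      set A' := A.erase v with hA'def
      have hA'card : A'.card = A.card - 1 := Finset.card_erase_of_mem hv
      set A1 := A'.filter (fun x => P v x) with hA1def
      set A2 := A'.filter (fun x => ¬ P v x) with hA2def
      have hsum : A1.card + A2.card = A'.card :=
        Finset.card_filter_add_card_filter_not (fun x => P v x)
      have hcase : ramseyNum a (b+1) ≤ A1.card ∨ ramseyNum (a+1) b ≤ A2.card := by omega
      have hA1A : A1 ⊆ A := (Finset.filter_subset _ _).trans (Finset.erase_subset _ _)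
      have hA2A : A2 ⊆ A := (Finset.filter_subset _ _).trans (Finset.erase_subset _ _)
      rcases hcase with h1 | h2
      · rcases iha (b+1) A1 h1 with ⟨B, hBA, hBcard, hB⟩ | ⟨B, hBA, hBcard, hB⟩
        · -- insert v into B
          have hvB : v ∉ B := fun h =>
            Finset.notMem_erase v A (Finset.filter_subset _ _ (hBA h))
          refine Or.inl ⟨insert v B, ?_, ?_, ?_⟩
          · exact Finset.insert_subset hv (hBA.trans hA1A)
          · rw [Finset.card_insert_of_notMem hvB, hBcard]
          · intro x hx y hy hxy
            rcases Finset.mem_insert.mp hx with hx' | hx' <;>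
              rcases Finset.mem_insert.mp hy with hy' | hy'
            · exact absurd (hx'.trans hy'.symm) hxy
            · subst hx'; exact (Finset.mem_filter.mp (hBA hy')).2
            · subst hy'; exact hs _ _ (Finset.mem_filter.mp (hBA hx')).2
            · exact hB x hx' y hy' hxy
        · exact Or.inr ⟨B, hBA.trans hA1A, hBcard, hB⟩
      · rcases ihb A2 h2 with ⟨B, hBA, hBcard, hB⟩ | ⟨B, hBA, hBcard, hB⟩
        · exact Or.inl ⟨B, hBA.trans hA2A, hBcard, hB⟩
        · have hvB : v ∉ B := fun h =>
            Finset.notMem_erase v A (Finset.filter_subset _ _ (hBA h))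
          refine Or.inr ⟨insert v B, ?_, ?_, ?_⟩
          · exact Finset.insert_subset hv (hBA.trans hA2A)
          · rw [Finset.card_insert_of_notMem hvB, hBcard]
          · intro x hx y hy hxy
            rcases Finset.mem_insert.mp hx with hx' | hx' <;>
              rcases Finset.mem_insert.mp hy with hy' | hy'
            · exact absurd (hx'.trans hy'.symm) hxy
            · subst hx'; exact (Finset.mem_filter.mp (hBA hy')).2
            · subst hy'; exact fun hp => (Finset.mem_filter.mp (hBA hx')).2 (hs _ _ hp)
            · exact hB x hx' y hy' hxy

/-- In an infinite-dimensional Banach space, for every `ε > 0` and every `n` one can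
find `n` points of the closed unit ball whose mutual distances lie between
`K_f(X) − ε` and `K_f(X) + ε`. -/
theorem exists_almost_equilateral_finite_sets
    (X : Type) [NormedAddCommGroup X] [NormedSpace ℝ X] [CompleteSpace X]
    (hX : ¬ FiniteDimensional ℝ X) (ε : ℝ) (hε : 0 < ε) :
    ∀ n : ℕ, ∃ x : Fin n → X, (∀ i, ‖x i‖ ≤ 1) ∧
      ∀ i j, i ≠ j →
        KottmanF X - ε ≤ ‖x i - x j‖ ∧ ‖x i - x j‖ ≤ KottmanF X + ε := by
  classical
  set S : Set ℝ := {r : ℝ | 0 < r ∧ ∀ n : ℕ, ∃ A : Finset X, A.card = n ∧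
    (∀ y ∈ A, ‖y‖ ≤ 1) ∧ ∀ y ∈ A, ∀ z ∈ A, y ≠ z → r ≤ ‖y - z‖} with hSdef
  have hK : KottmanF X = sSup S := rfl
  -- a separated sequence from Riesz's lemma
  obtain ⟨f, hf1, hf2⟩ := exists_seq_norm_le_one_le_norm_sub' (E := X) (c := (2:ℝ))
    (by norm_num) (R := 3) (by norm_num) hX
  set g : ℕ → X := fun n => (3:ℝ)⁻¹ • f n with hgdef
  have hg1 : ∀ n, ‖g n‖ ≤ 1 := by
    intro n
    have := hf1 n
    rw [hgdef]
    simp only [norm_smul, norm_inv, Real.norm_ofNat]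
    nlinarith [norm_nonneg (f n)]
  have hg2 : ∀ m n, m ≠ n → (3:ℝ)⁻¹ ≤ ‖g m - g n‖ := by
    intro m n hmn
    have h1 : (1:ℝ) ≤ ‖f m - f n‖ := hf2 hmn
    rw [hgdef]
    simp only [← smul_sub, norm_smul, norm_inv, Real.norm_ofNat]
    nlinarith
  have hginj : Function.Injective g := by
    intro m n h
    by_contra hmn
    have := hg2 m n hmn
    rw [h, sub_self, norm_zero] at this
    norm_num at this
  have hmem : (3:ℝ)⁻¹ ∈ S := by
    refine ⟨by norm_num, fun n => ⟨(Finset.range n).image g, ?_, ?_, ?_⟩⟩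
    · rw [Finset.card_image_of_injective _ hginj, Finset.card_range]
    · intro y hy
      obtain ⟨m, -, rfl⟩ := Finset.mem_image.mp hy
      exact hg1 m
    · intro y hy z hz hyz
      obtain ⟨m, -, rfl⟩ := Finset.mem_image.mp hy
      obtain ⟨k, -, rfl⟩ := Finset.mem_image.mp hz
      exact hg2 m k (fun h => hyz (by rw [h]))
  have hbdd : BddAbove S := by
    refine ⟨2, fun r hr => ?_⟩
    obtain ⟨hrpos, h⟩ := hr
    obtain ⟨A, hcard, hball, hsep⟩ := h 2
    obtain ⟨y, hy, z, hz, hyz⟩ := Finset.one_lt_card.mp (by rw [hcard]; norm_num)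
    have h1 := hsep y hy z hz hyz
    have h2 := norm_sub_le y z
    have := hball y hy
    have := hball z hz
    linarith
  have hSne : S.Nonempty := ⟨_, hmem⟩
  have h3K : (3:ℝ)⁻¹ ≤ sSup S := le_csSup hbdd hmem
  -- the main claim, as finsets
  have claim : ∀ n : ℕ, ∃ A : Finset X, A.card = n ∧ (∀ y ∈ A, ‖y‖ ≤ 1) ∧
      ∀ y ∈ A, ∀ z ∈ A, y ≠ z →
        sSup S - ε ≤ ‖y - z‖ ∧ ‖y - z‖ ≤ sSup S + ε := by
    intro n
    by_contra hno
    have hKe : sSup S + ε ∈ S := by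
      refine ⟨by linarith, fun N => ?_⟩
      obtain ⟨r, hrS, hrlt⟩ := exists_lt_of_lt_csSup hSne
        (show sSup S - ε < sSup S by linarith)
      obtain ⟨A, hcard, hball, hsep⟩ := hrS.2 (ramseyNum n N)
      rcases ramsey_pair (fun x y : X => ‖x - y‖ ≤ sSup S + ε)
          (fun x y h => by simpa only [norm_sub_rev x y] using h) n N A (le_of_eq hcard.symm) with
        ⟨B, hBA, hBcard, hB⟩ | ⟨B, hBA, hBcard, hB⟩
      · exact absurd ⟨B, hBcard, fun y hy => hball y (hBA hy), fun y hy z hz hyz =>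
          ⟨by linarith [hsep y (hBA hy) z (hBA hz) hyz], hB y hy z hz hyz⟩⟩ hno
      · exact ⟨B, hBcard, fun y hy => hball y (hBA hy), fun y hy z hz hyz =>
          (not_le.mp (hB y hy z hz hyz)).le⟩
    have := le_csSup hbdd hKe
    linarith
  -- convert finsets to tuples
  intro n
  obtain ⟨A, hcard, hball, hpair⟩ := claim n
  let e : A ≃ Fin n := A.equivFinOfCardEq hcard
  refine ⟨fun i => (e.symm i : X), fun i => hball _ (e.symm i).2, fun i j hij => ?_⟩
  rw [hK]
  exact hpair _ (e.symm i).2 _ (e.symm j).2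
    (fun h => hij (e.symm.injective.eq_iff.mp (Subtype.ext h)) )
end

section
/- Let X be a real Banach space with the following property: for every Banach space Y, every closed subspace E ⊆ Y with dim(Y/E) = 1, and every bounded linear operator τ : E → X, there exists a bounded linear operator T : Y → X extending τ with ‖T‖ ≤ ‖τ‖. Then for every Banach space Y, every subset M ⊆ Y, every point p ∈ Y, and every Lipschitz map f : M → X, there exists a Lipschitz map F : M ∪ {p} → X extending f with Lipschitz constant Lip(F) ≤ Lip(f). -/
/-!
The value `x₀` at `p` has to satisfy `‖f m - x₀‖ ≤ K d(p, m)` for all `m ∈ M`. Renorm `X × ℝ` by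
`N (x, t) = sup |φ (x, t)|` over the linear functionals `φ` with `|φ (x, 0)| ≤ ‖x‖` and
`|φ (f m, -1)| ≤ K d(p, m)`. Hahn–Banach together with McShane's extension of the real
`K`-Lipschitz maps `g ∘ f` shows that `N (x, 0) = ‖x‖`, and if `p ∉ closure M` then `N` is
equivalent to the product norm. The norm-one operator `(x, 0) ↦ x` on the hyperplane `X × 0` then
extends to a norm-one `T`, and `x₀ = T (0, 1)` works since
`‖f m - x₀‖ = ‖T (f m, -1)‖ ≤ N (f m, -1) ≤ K d(p, m)`.
If `p ∈ closure M`, take for `x₀` the limit of `f` at `p`.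
-/

open Set Filter Topology
open scoped NNReal

section Metric

variable {X Y : Type*} [PseudoMetricSpace X] [PseudoMetricSpace Y] {M : Set Y} {f : M → X}
  {K : ℝ≥0} {p : Y}

theorem LipschitzWith.exists_extension_insert (hf : LipschitzWith K f) {x₀ : X}
    (hx₀ : ∀ m : M, dist x₀ (f m) ≤ K * dist p m) :
    ∃ F : ↥(insert p M) → X, LipschitzWith K F ∧
      ∀ (y : Y) (hy : y ∈ M), F ⟨y, mem_insert_of_mem p hy⟩ = f ⟨y, hy⟩ := by
  classical
  refine ⟨fun z => if h : (z : Y) ∈ M then f ⟨z, h⟩ else x₀,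
    LipschitzWith.of_dist_le_mul ?_, fun y hy => dif_pos hy⟩
  rintro ⟨a, ha⟩ ⟨b, hb⟩
  rw [Subtype.dist_eq]
  by_cases haM : a ∈ M <;> by_cases hbM : b ∈ M <;> simp only [haM, hbM, dite_true, dite_false]
  · exact hf.dist_le_mul ⟨a, haM⟩ ⟨b, hbM⟩
  · obtain rfl : b = p := (mem_insert_iff.1 hb).resolve_right hbM
    simpa only [dist_comm] using hx₀ ⟨a, haM⟩
  · obtain rfl : a = p := (mem_insert_iff.1 ha).resolve_right haM
    exact hx₀ ⟨b, hbM⟩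
  · rw [dist_self]
    positivity

theorem LipschitzWith.exists_dist_le_of_mem_closure [CompleteSpace X] (hf : LipschitzWith K f)
    (hp : p ∈ closure M) : ∃ x₀ : X, ∀ m : M, dist x₀ (f m) ≤ K * dist p m := by
  have : (comap ((↑) : M → Y) (𝓝 p)).NeBot := mem_closure_iff_comap_neBot.1 hp
  have hcauchy : Cauchy ((comap ((↑) : M → Y) (𝓝 p)).map f) :=
    (cauchy_nhds.comap isUniformEmbedding_subtype_val.comap_uniformity.le).map
      hf.uniformContinuous
  obtain ⟨x₀, hx₀ : Tendsto f _ (𝓝 x₀)⟩ := CompleteSpace.complete hcauchy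
  exact ⟨x₀, fun m => le_of_tendsto_of_tendsto' (hx₀.dist tendsto_const_nhds)
    ((tendsto_comap.dist tendsto_const_nhds).const_mul _) fun y => hf.dist_le_mul y m⟩

theorem LipschitzWith.exists_abs_sub_le {φ : M → ℝ} (hφ : LipschitzWith K φ) (p : Y) :
    ∃ c : ℝ, ∀ m : M, |φ m - c| ≤ K * dist p m := by
  have hφ' : LipschitzOnWith K (Function.extend (↑) φ 0) M := by
    rw [lipschitzOnWith_iff_restrict]
    convert hφ
    ext m
    exact Subtype.val_injective.extend_apply φ 0 m
  obtain ⟨G, hG, hGφ⟩ := hφ'.extend_real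
  refine ⟨G p, fun m => ?_⟩
  rw [← Subtype.val_injective.extend_apply φ 0 m, hGφ m.2, ← Real.dist_eq, dist_comm]
  exact hG.dist_le_mul p m

end Metric

section ExtensionSeminorm

variable {X Y : Type*} [NormedAddCommGroup X] [NormedSpace ℝ X] [PseudoMetricSpace Y]
  {M : Set Y} (f : M → X) (p : Y) (K : ℝ≥0)

def extensionFunctionals : Set (X × ℝ →ₗ[ℝ] ℝ) :=
  {φ | (∀ x, |φ (x, 0)| ≤ ‖x‖) ∧ ∀ m : M, |φ (f m, -1)| ≤ K * dist p m}

noncomputable def extensionSeminorm : Seminorm ℝ (X × ℝ) :=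
  ⨆ φ : extensionFunctionals f p K, (normSeminorm ℝ ℝ).comp φ.1

variable {f p K}

theorem zero_mem_extensionFunctionals : (0 : X × ℝ →ₗ[ℝ] ℝ) ∈ extensionFunctionals f p K :=
  ⟨fun x => by simp, fun m => by simp; positivity⟩

theorem abs_le_of_mem_extensionFunctionals {φ : X × ℝ →ₗ[ℝ] ℝ}
    (hφ : φ ∈ extensionFunctionals f p K) (m₀ : M) (w : X × ℝ) :
    |φ w| ≤ ‖w.1‖ + |w.2| * (‖f m₀‖ + K * dist p m₀) := by
  have hw : φ w = φ (w.1, 0) + w.2 * (φ (f m₀, 0) - φ (f m₀, -1)) := by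
    rw [← smul_eq_mul, ← map_sub, ← map_smul, ← map_add]
    congr 1
    ext <;> simp
  rw [hw]
  refine (abs_add_le _ _).trans (add_le_add (hφ.1 w.1) ?_)
  rw [abs_mul]
  gcongr
  exact (abs_sub _ _).trans (add_le_add (hφ.1 _) (hφ.2 m₀))

theorem extensionSeminorm_apply [Nonempty M] (w : X × ℝ) :
    extensionSeminorm f p K w = ⨆ φ : extensionFunctionals f p K, |φ.1 w| := by
  obtain ⟨m₀⟩ := ‹Nonempty M›
  refine Seminorm.iSup_apply (Seminorm.bddAbove_range_iff.2 fun v =>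
    ⟨‖v.1‖ + |v.2| * (‖f m₀‖ + K * dist p m₀), ?_⟩)
  rintro _ ⟨φ, rfl⟩
  exact abs_le_of_mem_extensionFunctionals φ.2 m₀ v

theorem abs_le_extensionSeminorm [Nonempty M] {φ : X × ℝ →ₗ[ℝ] ℝ}
    (hφ : φ ∈ extensionFunctionals f p K) (w : X × ℝ) : |φ w| ≤ extensionSeminorm f p K w := by
  obtain ⟨m₀⟩ := ‹Nonempty M›
  rw [extensionSeminorm_apply]
  refine le_ciSup (f := fun φ : extensionFunctionals f p K => |φ.1 w|)
    ⟨‖w.1‖ + |w.2| * (‖f m₀‖ + K * dist p m₀), ?_⟩ ⟨φ, hφ⟩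
  rintro _ ⟨ψ, rfl⟩
  exact abs_le_of_mem_extensionFunctionals ψ.2 m₀ w

theorem extensionSeminorm_le [Nonempty M] {w : X × ℝ} {b : ℝ}
    (h : ∀ φ ∈ extensionFunctionals f p K, |φ w| ≤ b) : extensionSeminorm f p K w ≤ b := by
  have : Nonempty (extensionFunctionals f p K) := ⟨⟨0, zero_mem_extensionFunctionals⟩⟩
  rw [extensionSeminorm_apply]
  exact ciSup_le fun φ => h φ φ.2

theorem extensionSeminorm_le_dist [Nonempty M] (m : M) :
    extensionSeminorm f p K (f m, -1) ≤ K * dist p m :=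
  extensionSeminorm_le fun _ hφ => hφ.2 m

theorem extensionSeminorm_inl [Nonempty M] (hf : LipschitzWith K f) (x : X) :
    extensionSeminorm f p K (x, 0) = ‖x‖ := by
  refine le_antisymm (extensionSeminorm_le fun _ hφ => hφ.1 x) ?_
  obtain ⟨g, hg, hgx⟩ := exists_dual_vector'' ℝ x
  have hgf : LipschitzWith K (g ∘ f) := by
    simpa using (g.lipschitzWith_of_opNorm_le (K := 1) (by simpa using hg)).comp hf
  obtain ⟨c, hc⟩ := hgf.exists_abs_sub_le p
  let φ : X × ℝ →ₗ[ℝ] ℝ := (g : X →ₗ[ℝ] ℝ).coprod (LinearMap.toSpanSingleton ℝ ℝ c)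
  have hφ : φ ∈ extensionFunctionals f p K := by
    refine ⟨fun y => ?_, fun m => ?_⟩
    · simpa [φ] using g.le_of_opNorm_le hg y
    · simpa [φ, sub_eq_add_neg] using hc m
  simpa [φ, hgx] using abs_le_extensionSeminorm hφ (x, 0)

theorem mul_abs_snd_le_extensionSeminorm [Nonempty M] {d : ℝ} (hd : 0 ≤ d)
    (hdist : ∀ m : M, d ≤ dist p m) (w : X × ℝ) :
    K * d * |w.2| ≤ extensionSeminorm f p K w := by
  have hφ : (K * d : ℝ) • LinearMap.snd ℝ X ℝ ∈ extensionFunctionals f p K := by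
    refine ⟨fun x => by simp, fun m => ?_⟩
    simpa [abs_of_nonneg hd] using mul_le_mul_of_nonneg_left (hdist m) K.2
  simpa [abs_mul, abs_of_nonneg hd] using abs_le_extensionSeminorm hφ w

end ExtensionSeminorm

section Renorming

variable {X : Type*} [NormedAddCommGroup X] [NormedSpace ℝ X] (N : Seminorm ℝ (X × ℝ))

theorem Seminorm.le_mul_norm_of_apply_inl (hN : ∀ x, N (x, 0) = ‖x‖) (w : X × ℝ) :
    N w ≤ (1 + N (0, 1)) * ‖w‖ := by
  have hsplit : N w ≤ ‖w.1‖ + |w.2| * N (0, 1) := by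
    calc N w = N ((w.1, 0) + w.2 • (0, 1)) := by congr 1; ext <;> simp
      _ ≤ ‖w.1‖ + |w.2| * N (0, 1) := by
        grw [map_add_le_add, map_smul_eq_mul, Real.norm_eq_abs, hN]
  have h1 : ‖w.1‖ ≤ ‖w‖ := norm_fst_le w
  have h2 : |w.2| ≤ ‖w‖ := by simpa using norm_snd_le w
  nlinarith [apply_nonneg N (0, 1)]

theorem Seminorm.norm_le_mul_of_apply_inl (hN : ∀ x, N (x, 0) = ‖x‖) {C : ℝ}
    (hC : ∀ w, |w.2| ≤ C * N w) (w : X × ℝ) : ‖w‖ ≤ (1 + (N (0, 1) + 1) * C) * N w := by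
  have hsplit : ‖w.1‖ ≤ N w + |w.2| * N (0, 1) := by
    calc ‖w.1‖ = N (w + (-w.2) • (0, 1)) := by rw [← hN]; congr 1; ext <;> simp
      _ ≤ N w + |w.2| * N (0, 1) := by
        grw [map_add_le_add, map_smul_eq_mul, Real.norm_eq_abs, abs_neg]
  have h1 : ‖w‖ ≤ ‖w.1‖ + |w.2| :=
    (Prod.norm_def w).trans_le (max_le_add_of_nonneg (norm_nonneg _) (abs_nonneg _))
  nlinarith [apply_nonneg N (0, 1), hC w]

end Renorming

def HasHyperplaneExtensionProperty (X : Type) [NormedAddCommGroup X] [NormedSpace ℝ X] : Prop :=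
  ∀ (Y : Type) [NormedAddCommGroup Y] [NormedSpace ℝ Y] [CompleteSpace Y],
    ∀ (E : Subspace ℝ Y), IsClosed (E : Set Y) → Module.finrank ℝ (Y ⧸ E) = 1 →
      ∀ (τ : E →L[ℝ] X), ∃ T : Y →L[ℝ] X, (∀ e : E, T e = τ e) ∧ ‖T‖ ≤ ‖τ‖

-- A copy of `X × ℝ` without the product norm, so that it can be renormed.
def Renormed (X : Type) : Type := X × ℝ

instance (X : Type) [AddCommGroup X] : AddCommGroup (Renormed X) :=
  inferInstanceAs (AddCommGroup (X × ℝ))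

instance (X : Type) [AddCommGroup X] [Module ℝ X] : Module ℝ (Renormed X) :=
  inferInstanceAs (Module ℝ (X × ℝ))

def Renormed.equiv (X : Type) [AddCommGroup X] [Module ℝ X] : (X × ℝ) ≃ₗ[ℝ] Renormed X :=
  LinearEquiv.refl ℝ (X × ℝ)

namespace HasHyperplaneExtensionProperty

variable {X : Type} [NormedAddCommGroup X] [NormedSpace ℝ X] [CompleteSpace X]

theorem exists_norm_add_smul_le (hX : HasHyperplaneExtensionProperty X)
    (N : Seminorm ℝ (X × ℝ)) (hN : ∀ x, N (x, 0) = ‖x‖) {C : ℝ} (hC : ∀ w, |w.2| ≤ C * N w) :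
    ∃ z : X, ∀ x t, ‖x + t • z‖ ≤ N (x, t) := by
  have hlower := N.norm_le_mul_of_apply_inl hN hC
  let : Norm (Renormed X) := ⟨fun w => N w⟩
  let core : NormedSpace.Core ℝ (Renormed X) :=
    { norm_nonneg := fun w => apply_nonneg N w
      norm_smul := fun c w => map_smul_eq_mul N c w
      norm_triangle := fun v w => map_add_le_add N v w
      norm_eq_zero_iff := fun w => ⟨fun hw => norm_eq_zero.1 <| (norm_nonneg _).antisymm' <| by
        simpa [show N w = 0 from hw] using hlower w, fun hw => hw ▸ map_zero N⟩ }
  let := NormedAddCommGroup.ofCore core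
  let := NormedSpace.ofCore core
  let e : (X × ℝ) ≃L[ℝ] Renormed X := (Renormed.equiv X).toContinuousLinearEquivOfBounds _ _
    (N.le_mul_norm_of_apply_inl hN) hlower
  have : CompleteSpace (Renormed X) :=
    (completeSpace_congr (e := e.toEquiv) e.isUniformEmbedding).1 inferInstance
  let π : Renormed X →L[ℝ] ℝ :=
    (ContinuousLinearMap.snd ℝ X ℝ).comp (e.symm : Renormed X →L[ℝ] X × ℝ)
  have hπ : Function.Surjective π := fun t => ⟨e (0, t), by simp [π]⟩
  let E : Submodule ℝ (Renormed X) := LinearMap.ker (π : Renormed X →ₗ[ℝ] ℝ)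
  let τ : E →L[ℝ] X :=
    ((ContinuousLinearMap.fst ℝ X ℝ).comp (e.symm : Renormed X →L[ℝ] X × ℝ)).comp E.subtypeL
  have hτ : ‖τ‖ ≤ 1 := by
    refine τ.opNorm_le_bound zero_le_one fun v => ?_
    have hv : ((τ v, 0) : X × ℝ) = e.symm v := Prod.ext rfl (LinearMap.mem_ker.1 v.2).symm
    rw [one_mul]
    exact ((hN _).symm.trans (congrArg N hv)).le
  obtain ⟨T, hTτ, hT⟩ := hX (Renormed X) E π.isClosed_ker
    (((π : Renormed X →ₗ[ℝ] ℝ).quotKerEquivOfSurjective hπ).finrank_eq.trans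
      (Module.finrank_self ℝ)) τ
  refine ⟨T (e (0, 1)), fun x t => ?_⟩
  have hTx : T (e (x, 0)) = x := hTτ ⟨e (x, 0), by simp [E, π]⟩
  calc ‖x + t • T (e (0, 1))‖ = ‖T (e (x, t))‖ := by
        rw [show ((x, t) : X × ℝ) = (x, 0) + t • (0, 1) by simp, map_add, map_smul, map_add,
          map_smul, hTx]
    _ ≤ ‖T‖ * ‖e (x, t)‖ := T.le_opNorm _
    _ ≤ N (x, t) := mul_le_of_le_one_left (norm_nonneg _) (hT.trans hτ)

variable {Y : Type*} [PseudoMetricSpace Y] {M : Set Y} {f : M → X} {K : ℝ≥0}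

theorem exists_dist_le_of_notMem_closure (hX : HasHyperplaneExtensionProperty X) [Nonempty M]
    (hf : LipschitzWith K f) (hK : K ≠ 0) {p : Y} (hp : p ∉ closure M) :
    ∃ x₀ : X, ∀ m : M, dist x₀ (f m) ≤ K * dist p m := by
  obtain ⟨m₀⟩ := ‹Nonempty M›
  have hd : 0 < Metric.infDist p M := (Metric.infDist_pos_iff_notMem_closure ⟨_, m₀.2⟩).1 hp
  have hKd : 0 < K * Metric.infDist p M := mul_pos (by positivity) hd
  obtain ⟨z, hz⟩ := hX.exists_norm_add_smul_le (extensionSeminorm f p K)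
    (extensionSeminorm_inl hf) fun w => (le_inv_mul_iff₀ hKd).2 <|
      mul_abs_snd_le_extensionSeminorm hd.le (fun m => Metric.infDist_le_dist_of_mem m.2) w
  refine ⟨z, fun m => ?_⟩
  calc dist z (f m) = ‖f m + (-1 : ℝ) • z‖ := by
        rw [dist_comm, dist_eq_norm, neg_one_smul, sub_eq_add_neg]
    _ ≤ extensionSeminorm f p K (f m, -1) := hz _ _
    _ ≤ K * dist p m := extensionSeminorm_le_dist m

theorem exists_dist_le_mul_dist (hX : HasHyperplaneExtensionProperty X) (hf : LipschitzWith K f)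
    (p : Y) : ∃ x₀ : X, ∀ m : M, dist x₀ (f m) ≤ K * dist p m := by
  rcases isEmpty_or_nonempty M with hM | hM
  · exact ⟨0, fun m => isEmptyElim m⟩
  by_cases hp : p ∈ closure M
  · exact hf.exists_dist_le_of_mem_closure hp
  rcases eq_or_ne K 0 with rfl | hK
  · obtain ⟨m₀⟩ := hM
    exact ⟨f m₀, fun m => by simpa using hf.dist_le_mul m₀ m⟩
  · exact hX.exists_dist_le_of_notMem_closure hf hK hp

end HasHyperplaneExtensionProperty

/-- If every bounded operator from a closed one-codimensional subspace of a Banach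
space into `X` extends with equal norm to the whole space, then every Lipschitz map
from a subset of a Banach space into `X` extends to one more point with the same
Lipschitz constant. -/
theorem lipschitz_one_point_extension_of_codim_one_operator_extension
    (X : Type) [NormedAddCommGroup X] [NormedSpace ℝ X] [CompleteSpace X]
    (hX : ∀ (Y : Type) [NormedAddCommGroup Y] [NormedSpace ℝ Y] [CompleteSpace Y],
      ∀ (E : Subspace ℝ Y), IsClosed (E : Set Y) → Module.finrank ℝ (Y ⧸ E) = 1 →
        ∀ (τ : E →L[ℝ] X), ∃ T : Y →L[ℝ] X, (∀ e : E, T e = τ e) ∧ ‖T‖ ≤ ‖τ‖) :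
    ∀ (Y : Type) [NormedAddCommGroup Y] [NormedSpace ℝ Y] [CompleteSpace Y],
      ∀ (M : Set Y) (p : Y) (f : M → X) (K : NNReal), LipschitzWith K f →
        ∃ F : ↥(insert p M : Set Y) → X, LipschitzWith K F ∧
          ∀ (y : Y) (hy : y ∈ M), F ⟨y, Set.mem_insert_of_mem p hy⟩ = f ⟨y, hy⟩ := by
  intro Y _ _ _ M p f K hf
  obtain ⟨x₀, hx₀⟩ := HasHyperplaneExtensionProperty.exists_dist_le_mul_dist hX hf p
  exact hf.exists_extension_insert hx₀
end
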